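/- Let $\mathbb{F}_q$ be a finite field with $q$ elements, $\varepsilon, \omega, \chi$ multiplicative characters of $\mathbb{F}_q^\times$ (extended by $0$ at $0$), and $z \in \mathbb{F}_q$. Define $H(\varepsilon,\omega,\chi; z) = \sum_{x \in \mathbb{F}_q} \varepsilon(x)\omega(1-x)\chi^{-1}(1-zx)$. Then the change of variables $x = (1-y)/(1-zy)$ yields the identity $H(\varepsilon,\omega,\chi; z) = \omega\chi^{-1}(1-z)\, H(\omega, \varepsilon, \varepsilon\omega\chi^{-1}; z)$ for all $z \neq 1$. -/

import Mathlib

/-!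
The Möbius substitution `x ↦ (1 - x) / (1 - z x)` is an involution of `F` away from its pole
`x = z⁻¹` (where both summands vanish). It sends `1 - x` to `x (1 - z) / (1 - z x)` and `1 - z x`
to `(1 - z) / (1 - z x)`, so in each summand the character values at `1 - z x` cancel and those
at `1 - z` factor out.
-/

/-- The finite hypergeometric sum `H(ε,ω,χ;z) = ∑_{x ∈ 𝔽_q} ε(x) ω(1-x) χ⁻¹(1-zx)`,
where multiplicative characters are extended by `0` at `0`. -/
noncomputable def hypSum {F : Type*} [Field F] [Fintype F]
    (ε ω χ : MulChar F ℂ) (z : F) : ℂ :=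
  ∑ x : F, ε x * ω (1 - x) * χ⁻¹ (1 - z * x)

section

variable {F R : Type*} [Field F] [CommGroupWithZero R]

noncomputable def hypTerm (ε ω χ : MulChar F R) (z x : F) : R :=
  ε x * ω (1 - x) * χ⁻¹ (1 - z * x)

open Classical in
/-- Fixing the pole `x = z⁻¹` makes the substitution an involution of all of `F`. -/
noncomputable def hypSubst (z x : F) : F :=
  if 1 - z * x = 0 then x else (1 - x) / (1 - z * x)

lemma hypSubst_of_ne_zero {z x : F} (hx : 1 - z * x ≠ 0) :
    hypSubst z x = (1 - x) / (1 - z * x) := by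
  simp [hypSubst, hx]

lemma one_sub_hypSubst {z x : F} (hx : 1 - z * x ≠ 0) :
    1 - hypSubst z x = x * (1 - z) / (1 - z * x) := by
  rw [hypSubst_of_ne_zero hx, eq_div_iff hx, sub_mul, div_mul_cancel₀ _ hx]
  ring

lemma one_sub_mul_hypSubst {z x : F} (hx : 1 - z * x ≠ 0) :
    1 - z * hypSubst z x = (1 - z) / (1 - z * x) := by
  rw [hypSubst_of_ne_zero hx]
  field_simp
  ring

lemma hypSubst_involutive {z : F} (hz : z ≠ 1) : Function.Involutive (hypSubst z) := by
  intro x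
  by_cases hx : 1 - z * x = 0
  · simp only [hypSubst, hx, if_true]
  have hz' : 1 - z ≠ 0 := sub_ne_zero.mpr hz.symm
  rw [hypSubst_of_ne_zero (by rw [one_sub_mul_hypSubst hx]; exact div_ne_zero hz' hx),
    one_sub_hypSubst hx, one_sub_mul_hypSubst hx, div_div_div_cancel_right₀ hx]
  field_simp

lemma hypTerm_eq_mul_hypTerm_hypSubst {z : F} (hz : z ≠ 1) (ε ω χ : MulChar F R) (x : F) :
    hypTerm ε ω χ z x =
      ω (1 - z) * χ⁻¹ (1 - z) * hypTerm ω ε (ε * ω * χ⁻¹) z (hypSubst z x) := by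
  by_cases hx : 1 - z * x = 0
  · simp [hypTerm, hypSubst, hx, MulChar.map_zero]
  have hz' : 1 - z ≠ 0 := sub_ne_zero.mpr hz.symm
  have hne : ∀ (ψ : MulChar F R) {a : F}, a ≠ 0 → ψ a ≠ 0 := fun ψ _ ha =>
    MulChar.apply_ne_zero_iff.mpr ha.isUnit
  rw [hypTerm, hypTerm, one_sub_hypSubst hx, one_sub_mul_hypSubst hx, hypSubst_of_ne_zero hx]
  simp only [div_eq_mul_inv, map_mul, MulChar.inv_apply_eq_inv', MulChar.mul_apply,
    ← MulChar.inv_apply']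
  have := hne ε hx
  have := hne ω hx
  have := hne ε hz'
  have := hne ω hz'
  have := hne χ hz'
  -- keeps `field_simp` from rewriting `1 - z * x` into a form the hypotheses no longer match
  set u := 1 - z * x
  field_simp

end

/-- The change of variables `x = (1-y)/(1-zy)` yields
`H(ε,ω,χ;z) = (ωχ⁻¹)(1-z) ⬝ H(ω,ε,εωχ⁻¹;z)` for `z ≠ 1`. -/
theorem hypSum_transformation {F : Type*} [Field F] [Fintype F]
    (ε ω χ : MulChar F ℂ) (z : F) (hz : z ≠ 1) :
    hypSum ε ω χ z = ω (1 - z) * χ⁻¹ (1 - z) * hypSum ω ε (ε * ω * χ⁻¹) z := by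
  rw [hypSum, hypSum, Finset.mul_sum]
  exact Fintype.sum_bijective _ (hypSubst_involutive hz).bijective _ _
    (hypTerm_eq_mul_hypTerm_hypSubst hz ε ω χ)
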